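/- arXiv:1303.0926 — 4 statements merged into one kernel-verified Lean document; each statement's English description precedes it below -/
import Mathlib

section
/- Let p be an odd prime, e ≥ 2, and let γ be a unit of Z/p^eZ with γ^(p−1) ≠ 1. Then 1 + p^(e−1) lies in the cyclic subgroup generated by γ. -/
/-!
The unit group of `ZMod (p ^ e)` is cyclic of order `p ^ (e - 1) * (p - 1)`. Since
`γ ^ (p - 1) ≠ 1`, the order of `γ` is divisible by `p`, while `1 + p ^ (e - 1)` has order
exactly `p`. In a finite cyclic group, an element whose order divides the order of `γ` is a
power of `γ`.
-/

open Subgroup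

theorem IsCyclic.mem_zpowers_of_orderOf_dvd {G : Type*} [Group G] [Finite G] [IsCyclic G]
    {g x : G} (h : orderOf x ∣ orderOf g) : x ∈ zpowers g := by
  classical
  have : Fintype G := Fintype.ofFinite G
  -- A cyclic group has at most `orderOf g` roots of `y ^ orderOf g = 1`, and `zpowers g`
  -- already supplies that many.
  have hroots_eq : ({y : G | y ^ orderOf g = 1} : Finset G) = (zpowers g : Set G).toFinset := by
    refine (Finset.eq_of_subset_of_card_le ?_ ?_).symm
    · rintro _ hy
      obtain ⟨k, rfl⟩ := mem_zpowers_iff.mp (Set.mem_toFinset.mp hy)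
      rw [Finset.mem_filter_univ, ← zpow_natCast, ← zpow_mul, mul_comm, zpow_mul, zpow_natCast,
        pow_orderOf_eq_one, one_zpow]
    · calc _ ≤ orderOf g := IsCyclic.card_pow_eq_one_le (orderOf_pos g)
        _ = _ := by simp [Set.toFinset_card, ← Nat.card_eq_fintype_card, Nat.card_zpowers]
  have hx : x ∈ ({y : G | y ^ orderOf g = 1} : Finset G) := by
    simpa using orderOf_dvd_iff_pow_eq_one.mp h
  simpa [hroots_eq] using hx

theorem Nat.Prime.dvd_orderOf_of_pow_ne_one {G : Type*} [Group G] [Finite G] {p a b : ℕ}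
    (hp : p.Prime) (hcard : Nat.card G ∣ p ^ a * b) {g : G} (hg : g ^ b ≠ 1) :
    p ∣ orderOf g := by
  by_contra hpg
  have hcop : (orderOf g).Coprime (p ^ a) :=
    ((hp.coprime_iff_not_dvd.mpr hpg).pow_left a).symm
  exact hg (orderOf_dvd_iff_pow_eq_one.mp
    (hcop.dvd_of_dvd_mul_left ((orderOf_dvd_natCard g).trans hcard)))

theorem ZMod.orderOf_one_add_prime_pow {p m : ℕ} (hp : p.Prime) (hp2 : p ≠ 2) (hm : m ≠ 0) :
    orderOf (1 + p ^ m : ZMod (p ^ (m + 1))) = p := by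
  have hp3 : 3 ≤ p := hp.two_le.lt_of_ne' hp2
  have hpm : m + 2 ≤ p * m := by nlinarith [Nat.one_le_iff_ne_zero.mpr hm]
  have := orderOf_one_add_mul_prime_pow hp m hm hpm 1 (by exact_mod_cast hp.not_dvd_one) 1
  rwa [add_comm 1 m, Int.cast_one, mul_one, pow_one] at this

/-- For odd prime `p`, `e ≥ 2`, and a unit `γ` of `Z/p^eZ` with `γ ^ (p - 1) ≠ 1`,
the element `1 + p ^ (e - 1)` lies in the subgroup generated by `γ`. -/
theorem stmt_8 (p e : ℕ) (hp : p.Prime) (hodd : Odd p) (he : 2 ≤ e)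
    (γ : (ZMod (p ^ e))ˣ) (hγ : γ ^ (p - 1) ≠ 1) :
    ∃ k : ℤ, ((γ ^ k : (ZMod (p ^ e))ˣ) : ZMod (p ^ e)) = 1 + (p : ZMod (p ^ e)) ^ (e - 1) := by
  obtain ⟨m, rfl⟩ : ∃ m, e = m + 1 := ⟨e - 1, by omega⟩
  have hp2 : p ≠ 2 := by rintro rfl; exact Nat.not_odd_iff_even.mpr even_two hodd
  have := ZMod.isCyclic_units_of_prime_pow p hp hp2 (m + 1)
  have hu := ZMod.orderOf_one_add_prime_pow hp hp2 (show m ≠ 0 by omega)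
  let u := (orderOf_pos_iff.mp (hu ▸ hp.pos)).unit
  have : NeZero (p ^ (m + 1)) := ⟨pow_ne_zero _ hp.ne_zero⟩
  have hpγ : p ∣ orderOf γ := hp.dvd_orderOf_of_pow_ne_one (a := m)
    (by rw [Nat.card_eq_fintype_card, ZMod.card_units_eq_totient, Nat.totient_prime_pow_succ hp])
    hγ
  have huγ : orderOf u ∣ orderOf γ := by rwa [← orderOf_units, IsOfFinOrder.val_unit, hu]
  obtain ⟨k, hk⟩ := mem_zpowers_iff.mp (IsCyclic.mem_zpowers_of_orderOf_dvd huγ)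
  exact ⟨k, by rw [hk]; simp [u]⟩
end

section
/- Let p be an odd prime and n ≥ 1, q = p^n. The number of elements δ̄ ∈ F_q with δ̄^2 ∉ F_p equals q − p if n is odd, and q + 1 − 2p if n is even. -/
/-!
Over a finite field `K` of odd characteristic, the quadratic character of an extension `F`
factors through the norm: `χ_F = χ_K ∘ N`. For `a ∈ K` this gives `χ_F(a) = χ_K(a) ^ [F : K]`,
which is `χ_K(a)` for odd degree and `1` (for `a ≠ 0`) for even degree. Since `δ ^ 2 = a` has
`χ_F(a) + 1` solutions, the number of `δ` with `δ ^ 2 ∈ K` is `∑ₐ χ_K(a) ^ [F : K] + |K|`,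
which for `K = 𝔽_p` is `p` for odd `n` and `2p - 1` for even `n`.
-/

open Finset Module

theorem Nat.pow_sub_one_div_mul_div_two {q : ℕ} (hq : Odd q) (d : ℕ) :
    (q ^ d - 1) / (q - 1) * (q / 2) = q ^ d / 2 := by
  obtain ⟨k, rfl⟩ := hq
  obtain ⟨m, hm⟩ := Nat.sub_dvd_pow_sub_pow (2 * k + 1) 1 d
  obtain ⟨M, hM⟩ := (odd_two_mul_add_one k).pow (n := d)
  rcases Nat.eq_zero_or_pos k with rfl | hk
  · simp
  rw [one_pow, hM, Nat.add_sub_cancel, Nat.add_sub_cancel] at hm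
  rw [hM, Nat.add_sub_cancel, Nat.add_sub_cancel, hm, Nat.mul_div_cancel_left _ (by omega),
    show (2 * k + 1) / 2 = k by omega, mul_assoc, mul_comm m k]
  omega

section

variable {K F : Type*} [Field K] [Fintype K] [DecidableEq K] [Field F] [Fintype F] [DecidableEq F]
  [Algebra K F]

/-- Both sides are Euler's criterion: `χ_K(N x) = (N x) ^ (|K| / 2)` with
`N x = x ^ ((|F| - 1) / (|K| - 1))`, against `χ_F(x) = x ^ (|F| / 2)`. -/
theorem quadraticChar_norm (hK : ringChar K ≠ 2) (x : F) :
    quadraticChar K (Algebra.norm K x) = quadraticChar F x := by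
  have hF : ringChar F ≠ 2 := Algebra.ringChar_eq K F ▸ hK
  have hKodd : Odd (Fintype.card K) := Nat.odd_iff.mpr (FiniteField.odd_card_of_char_ne_two hK)
  refine (quadraticChar_isQuadratic K).eq_of_eq_coe (quadraticChar_isQuadratic F) hF ?_
  rw [← map_intCast (algebraMap K F), quadraticChar_eq_pow_of_char_ne_two' hK, map_pow,
    FiniteField.algebraMap_norm_eq_pow, quadraticChar_eq_pow_of_char_ne_two' hF, ← pow_mul,
    Nat.card_eq_fintype_card, Nat.card_eq_fintype_card, card_eq_pow_finrank (K := K) (V := F),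
    Nat.pow_sub_one_div_mul_div_two hKodd]

theorem quadraticChar_algebraMap (hK : ringChar K ≠ 2) (a : K) :
    quadraticChar F (algebraMap K F a) = (quadraticChar K ^ finrank K F) a := by
  rw [← quadraticChar_norm hK, Algebra.norm_algebraMap, map_pow,
    MulChar.pow_apply' _ finrank_pos.ne']

theorem ncard_sq_mem_range_algebraMap (hK : ringChar K ≠ 2) :
    ({δ : F | δ ^ 2 ∈ Set.range (algebraMap K F)}.ncard : ℤ) =
      ∑ a : K, (quadraticChar K ^ finrank K F) a + Fintype.card K := by
  have hF : ringChar F ≠ 2 := Algebra.ringChar_eq K F ▸ hK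
  have hunion : {δ : F | δ ^ 2 ∈ Set.range (algebraMap K F)} =
      ↑(univ.biUnion fun a : K ↦ {δ : F | δ ^ 2 = algebraMap K F a}.toFinset) := by
    ext δ
    simp [eq_comm]
  have hdisj : (↑(univ : Finset K) : Set K).PairwiseDisjoint
      fun a : K ↦ {δ : F | δ ^ 2 = algebraMap K F a}.toFinset := by
    intro a _ b _ hab
    simp only [Function.onFun, Set.disjoint_toFinset, Set.disjoint_left]
    exact fun δ ha hb ↦ hab ((algebraMap K F).injective (ha.symm.trans hb))
  rw [hunion, Set.ncard_coe_finset, card_biUnion hdisj]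
  push_cast
  simp only [quadraticChar_card_sqrts hF, quadraticChar_algebraMap hK, sum_add_distrib]
  simp

end

theorem stmt_12_general (p n : ℕ) [Fact p.Prime] (hodd : Odd p)
    (F : Type*) [Field F] [Fintype F] [Algebra (ZMod p) F]
    (hcard : Fintype.card F = p ^ n) :
    (Odd n →
      Set.ncard {δ : F | δ ^ 2 ∉ Set.range (algebraMap (ZMod p) F)} = p ^ n - p) ∧
    (Even n →
      Set.ncard {δ : F | δ ^ 2 ∉ Set.range (algebraMap (ZMod p) F)} = p ^ n + 1 - 2 * p) := by
  classical
  have hp : p.Prime := Fact.out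
  have hchar : ringChar (ZMod p) ≠ 2 := by
    rw [ZMod.ringChar_zmod_n]
    rintro rfl
    exact Nat.not_even_iff_odd.mpr hodd even_two
  have hrank : finrank (ZMod p) F = n :=
    Nat.pow_right_injective hp.two_le <|
      show p ^ _ = p ^ n by rw [← hcard, card_eq_pow_finrank (K := ZMod p), ZMod.card]
  have hcount := ncard_sq_mem_range_algebraMap (F := F) hchar
  rw [hrank, ZMod.card] at hcount
  have hcompl := Set.ncard_add_ncard_compl {δ : F | δ ^ 2 ∈ Set.range (algebraMap (ZMod p) F)}
  rw [Set.compl_ofPred, Nat.card_eq_fintype_card, hcard] at hcompl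
  constructor
  · intro hn
    rw [(quadraticChar_isQuadratic _).pow_odd hn, quadraticChar_sum_zero hchar, zero_add] at hcount
    omega
  · intro hn
    rw [(quadraticChar_isQuadratic _).pow_even hn, MulChar.sum_one_eq_card_units,
      ZMod.card_units] at hcount
    have := hp.pos
    omega

/-- In the finite field `F` with `p ^ n` elements (`p` odd prime), the number of
`δ` with `δ ^ 2 ∉ F_p` is `q - p` for odd `n`, and `q + 1 - 2 p` for even `n`. -/
theorem stmt_12 (p n : ℕ) [Fact p.Prime] (hodd : Odd p) (hn : 1 ≤ n)
    (F : Type*) [Field F] [Fintype F] [Algebra (ZMod p) F]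
    (hcard : Fintype.card F = p ^ n) :
    (Odd n →
      Set.ncard {δ : F | δ ^ 2 ∉ Set.range (algebraMap (ZMod p) F)} = p ^ n - p) ∧
    (Even n →
      Set.ncard {δ : F | δ ^ 2 ∉ Set.range (algebraMap (ZMod p) F)} = p ^ n + 1 - 2 * p) :=
  stmt_12_general p n hodd F hcard
end

section
/- Let p be an odd prime, e ≥ 2, and M ≥ 2 an integer that is not a power of p. Define ψ : Z/p^eZ → Z by ψ(x) = (the representative of x in {0,…,p^e−1}) mod M. Then for every a ∈ Z/p^eZ there exists j ∈ {0,…,p−2} such that ψ(a + j·p^(e−1)) ≠ ψ(a + (j+1)·p^(e−1)); in particular ψ is not constant on any coset a + p^(e−1)·(Z/p^eZ). -/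
/-! Adding `q = p^(e-1)` to a residue raises its representative by exactly `q` unless the sum
wraps around past `p^e`, and since `2q ≤ p^e` this wrap can happen at only one of two consecutive
steps. At a step without wrap `ψ` changes, because `M ∤ q` when `M` is not a power of `p`. -/

theorem Nat.not_dvd_pow_of_forall_ne_pow {p M : ℕ} (hp : p.Prime) (hM : ∀ t, M ≠ p ^ t) (n : ℕ) :
    ¬ M ∣ p ^ n := fun h ↦
  let ⟨t, _, ht⟩ := (Nat.dvd_prime_pow hp).mp h
  hM t ht

theorem Nat.mod_ne_add_mod_of_not_dvd {M c : ℕ} (hc : ¬ M ∣ c) (b : ℕ) : b % M ≠ (b + c) % M :=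
  fun h ↦ hc <| by simpa using (Nat.modEq_iff_dvd' (Nat.le_add_right b c)).mp h

namespace ZMod

variable {n : ℕ}

theorem val_mod_ne_val_add_mod {M : ℕ} {b x : ZMod n} (hlt : b.val + x.val < n)
    (hx : ¬ M ∣ x.val) : b.val % M ≠ (b + x).val % M := by
  rw [val_add_of_lt hlt]
  exact Nat.mod_ne_add_mod_of_not_dvd hx _

theorem exists_le_one_val_add_mul_add_val_lt [NeZero n] (a x : ZMod n) (hx : 2 * x.val ≤ n) :
    ∃ j : ℕ, j ≤ 1 ∧ (a + j * x).val + x.val < n := by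
  by_cases h : a.val + x.val < n
  · exact ⟨0, zero_le_one, by simpa using h⟩
  · refine ⟨1, le_rfl, ?_⟩
    have := a.val_lt
    have hwrap : (a + x).val = a.val + x.val - n := by
      rw [val_add, Nat.mod_eq_sub_mod (not_lt.mp h), Nat.mod_eq_of_lt (by omega)]
    simp only [Nat.cast_one, one_mul, hwrap]
    omega

end ZMod

theorem stmt_16_general (p e M : ℕ) (hp : p.Prime) (hodd : Odd p) (he : 2 ≤ e)
    (hMp : ∀ t : ℕ, M ≠ p ^ t) :
    ∀ a : ZMod (p ^ e),
      (∃ j : ℕ, j ≤ p - 2 ∧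
        (a + (j : ZMod (p ^ e)) * (p : ZMod (p ^ e)) ^ (e - 1)).val % M ≠
        (a + ((j : ZMod (p ^ e)) + 1) * (p : ZMod (p ^ e)) ^ (e - 1)).val % M) ∧
      ¬ (∀ r s : ZMod (p ^ e),
        (a + (p : ZMod (p ^ e)) ^ (e - 1) * r).val % M =
        (a + (p : ZMod (p ^ e)) ^ (e - 1) * s).val % M) := by
  intro a
  have hp3 : 3 ≤ p := by
    have := hp.two_le
    have := Nat.odd_iff.mp hodd
    omega
  have : NeZero (p ^ e) := ⟨pow_ne_zero e hp.ne_zero⟩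
  set x : ZMod (p ^ e) := (p : ZMod (p ^ e)) ^ (e - 1)
  have hpow : p ^ e = p * p ^ (e - 1) := by rw [← pow_succ', Nat.sub_add_cancel (by omega)]
  have hxval : x.val = p ^ (e - 1) := by
    rw [show x = ((p ^ (e - 1) : ℕ) : ZMod (p ^ e)) by push_cast; rfl, ZMod.val_natCast_of_lt]
    exact Nat.pow_lt_pow_right hp.one_lt (by omega)
  obtain ⟨j, hj, hlt⟩ :=
    a.exists_le_one_val_add_mul_add_val_lt x (by rw [hxval, hpow]; gcongr; omega)
  have hne : (a + j * x).val % M ≠ (a + (j + 1) * x).val % M := by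
    rw [add_one_mul, ← add_assoc]
    exact ZMod.val_mod_ne_val_add_mod hlt (hxval ▸ Nat.not_dvd_pow_of_forall_ne_pow hp hMp _)
  refine ⟨⟨j, by omega, hne⟩, fun hconst ↦ hne ?_⟩
  simpa only [mul_comm x] using hconst j (j + 1)

/-- For `ψ x = x.val % M` on `Z/p^eZ`, with `M ≥ 2` not a power of `p`: for every
`a` there is `j ≤ p - 2` with `ψ (a + j p^(e-1)) ≠ ψ (a + (j+1) p^(e-1))`; in
particular `ψ` is not constant on the coset `a + p^(e-1) * (Z/p^eZ)`. -/
theorem stmt_16 (p e M : ℕ) (hp : p.Prime) (hodd : Odd p) (he : 2 ≤ e)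
    (hM : 2 ≤ M) (hMp : ∀ t : ℕ, M ≠ p ^ t) :
    ∀ a : ZMod (p ^ e),
      (∃ j : ℕ, j ≤ p - 2 ∧
        (a + (j : ZMod (p ^ e)) * (p : ZMod (p ^ e)) ^ (e - 1)).val % M ≠
        (a + ((j : ZMod (p ^ e)) + 1) * (p : ZMod (p ^ e)) ^ (e - 1)).val % M) ∧
      ¬ (∀ r s : ZMod (p ^ e),
        (a + (p : ZMod (p ^ e)) ^ (e - 1) * r).val % M =
        (a + (p : ZMod (p ^ e)) ^ (e - 1) * s).val % M) :=
  stmt_16_general p e M hp hodd he hMp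
end

section
/- Let p be an odd prime, e ≥ 2, and let γ be an element of Z/p^eZ of multiplicative order m, where m > 1 divides p−1. Write integer representatives. For 1 ≤ i < e and any a ∈ Z/p^eZ whose representative is not divisible by p^i, define for x ∈ Z/p^eZ the truncation x_{(i)} ∈ {0,…,p^i−1} with x_{(i)} ≡ x mod p^i. Then there exists k ∈ {1,…,m} such that γ·(γ^k a)_{(i)} ≢ (γ^{k+1} a)_{(i)} mod p^{i+1}. -/
/-!
Suppose every congruence `γ̃ x_k ≡ x_{k+1} (mod p^{i+1})` holds, where `x_k = (γ^k a)_{(i)}`.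
Since `γ^m = 1` the sequence `x_k` is `m`-periodic, so summing the congruences over one
period gives `(γ̃ - 1) S ≡ 0` for `S = x_1 + ⋯ + x_m`. As `γ` has order prime to `p` and
`γ ≠ 1`, it is not `≡ 1 (mod p)`, hence `γ̃ - 1` is invertible and `p^{i+1} ∣ S`. But each
`x_k` lies in `(0, p^i)` because `p^i ∤ a` and `γ` is a unit, so `0 < S < m p^i < p^{i+1}`.
-/

open Finset

namespace ZMod

theorem dvd_val_iff_castHom_eq_zero {n d : ℕ} [NeZero n] (hd : d ∣ n) (x : ZMod n) :
    d ∣ x.val ↔ castHom hd (ZMod d) x = 0 := by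
  rw [castHom_apply, ← natCast_val, natCast_eq_zero_iff]

theorem dvd_val_mul_iff_of_isUnit {n d : ℕ} [NeZero n] (hd : d ∣ n) {u : ZMod n}
    (hu : IsUnit u) (a : ZMod n) : d ∣ (u * a).val ↔ d ∣ a.val := by
  rw [dvd_val_iff_castHom_eq_zero hd, dvd_val_iff_castHom_eq_zero hd, map_mul,
    (hu.map _).mul_right_eq_zero]

theorem isUnit_of_castHom_ne_zero {p k : ℕ} (hp : p.Prime) (hk : k ≠ 0) {x : ZMod (p ^ k)}
    (hx : castHom (dvd_pow_self p hk) (ZMod p) x ≠ 0) : IsUnit x := by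
  have : NeZero (p ^ k) := ⟨pow_ne_zero k hp.ne_zero⟩
  rw [Ne, ← dvd_val_iff_castHom_eq_zero, ← hp.coprime_iff_not_dvd] at hx
  rw [← natCast_zmod_val x, isUnit_iff_coprime]
  exact hx.symm.pow_right k

theorem eq_one_of_castHom_eq_one {p k : ℕ} (hp : p.Prime) (hk : k ≠ 0) {γ : ZMod (p ^ k)}
    (hγ : castHom (dvd_pow_self p hk) (ZMod p) γ = 1) (hcop : (orderOf γ).Coprime p) :
    γ = 1 := by
  have : NeZero (p ^ k) := ⟨pow_ne_zero k hp.ne_zero⟩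
  have hgeom : (γ - 1) * ∑ j ∈ range (orderOf γ), γ ^ j = 0 := by
    rw [mul_geom_sum, pow_orderOf_eq_one, sub_self]
  have hunit : IsUnit (∑ j ∈ range (orderOf γ), γ ^ j) := by
    refine isUnit_of_castHom_ne_zero hp hk ?_
    simp only [map_sum, map_pow, hγ, one_pow, sum_const, card_range, nsmul_eq_mul, mul_one]
    rwa [Ne, natCast_eq_zero_iff, ← hp.coprime_iff_not_dvd, Nat.coprime_comm]
  exact sub_eq_zero.mp (hunit.mul_left_eq_zero.mp hgeom)

end ZMod

theorem mul_sum_range_eq_of_mul_eq_succ {R : Type*} [Semiring R] [IsRightCancelAdd R] {c : R} {f : ℕ → R} {m : ℕ}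
    (hf : ∀ k < m, c * f k = f (k + 1)) (hper : f m = f 0) :
    c * ∑ k ∈ range m, f k = ∑ k ∈ range m, f k := by
  rw [mul_sum, sum_congr rfl fun k hk => hf k (mem_range.mp hk)]
  have h := (sum_range_succ' f m).symm.trans (sum_range_succ f m)
  rwa [hper, add_left_inj] at h

theorem Nat.pow_dvd_sum_of_mul_modEq_succ {p j m c : ℕ} (hp : p.Prime) (hc : (c : ZMod p) ≠ 1)
    {x : ℕ → ℕ} (hx : ∀ k < m, c * x k ≡ x (k + 1) [MOD p ^ j]) (hper : x m = x 0) :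
    p ^ j ∣ ∑ k ∈ range m, x k := by
  obtain rfl | hj := eq_or_ne j 0
  · simp
  rw [← ZMod.natCast_eq_zero_iff, Nat.cast_sum]
  have hsum := mul_sum_range_eq_of_mul_eq_succ (c := (c : ZMod (p ^ j)))
    (f := fun k => (x k : ZMod (p ^ j)))
    (fun k hk => by exact_mod_cast (ZMod.natCast_eq_natCast_iff _ _ _).mpr (hx k hk))
    (congrArg _ hper)
  have hunit : IsUnit ((c : ZMod (p ^ j)) - 1) :=
    ZMod.isUnit_of_castHom_ne_zero hp hj (by rwa [map_sub, map_natCast, map_one, sub_ne_zero])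
  rwa [← sub_eq_zero, ← sub_one_mul, hunit.mul_right_eq_zero] at hsum

theorem stmt_19_general (p e m : ℕ) (hp : p.Prime)
    (hm : m.Prime) (hmd : m ∣ p - 1)
    (γ : ZMod (p ^ e)) (hγ : orderOf γ = m)
    (i : ℕ) (hie : i < e)
    (a : ZMod (p ^ e)) (ha : ¬ p ^ i ∣ a.val) :
    ∃ k : ℕ, 1 ≤ k ∧ k ≤ m ∧
      ¬ (γ.val * ((γ ^ k * a).val % p ^ i) ≡
          (γ ^ (k + 1) * a).val % p ^ i [MOD p ^ (i + 1)]) := by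
  have : NeZero (p ^ e) := ⟨pow_ne_zero e hp.ne_zero⟩
  have he0 : e ≠ 0 := Nat.ne_zero_of_lt hie
  have hmp : m < p :=
    (Nat.le_of_dvd (Nat.sub_pos_of_lt hp.one_lt) hmd).trans_lt (Nat.sub_lt hp.pos one_pos)
  have hγm : γ ^ m = 1 := hγ ▸ pow_orderOf_eq_one γ
  have hγp : (γ.val : ZMod p) ≠ 1 := fun h => hm.ne_one <| by
    rw [← hγ, orderOf_eq_one_iff]
    refine ZMod.eq_one_of_castHom_eq_one hp he0 ?_ (hγ ▸ (Nat.coprime_primes hm hp).mpr hmp.ne)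
    rwa [ZMod.castHom_apply, ← ZMod.natCast_val]
  set x : ℕ → ℕ := fun k => (γ ^ (k + 1) * a).val % p ^ i with hx
  have hx_pos : ∀ k, 0 < x k := fun k => Nat.pos_of_ne_zero fun h => ha <|
    (ZMod.dvd_val_mul_iff_of_isUnit (pow_dvd_pow p hie.le)
      ((IsUnit.of_pow_eq_one hγm hm.ne_zero).pow _) a).mp (Nat.dvd_of_mod_eq_zero h)
  by_contra! h
  have hdvd : p ^ (i + 1) ∣ ∑ k ∈ range m, x k :=
    Nat.pow_dvd_sum_of_mul_modEq_succ hp hγp (fun k hk => h (k + 1) (by omega) (by omega))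
      (by simp only [hx, pow_succ γ m, hγm, one_mul, zero_add, pow_one])
  have hlt : ∑ k ∈ range m, x k < p ^ (i + 1) :=
    calc ∑ k ∈ range m, x k < ∑ _k ∈ range m, p ^ i :=
          sum_lt_sum_of_nonempty (nonempty_range_iff.mpr hm.ne_zero)
            fun k _ => Nat.mod_lt _ (pow_pos hp.pos i)
      _ ≤ p ^ (i + 1) := by
          rw [sum_const, card_range, smul_eq_mul, pow_succ']
          exact Nat.mul_le_mul_right _ hmp.le
  exact hlt.not_ge (Nat.le_of_dvd (sum_pos (fun k _ => hx_pos k)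
    (nonempty_range_iff.mpr hm.ne_zero)) hdvd)

/-- Let `γ ∈ Z/p^eZ` have multiplicative order `m`, a prime dividing `p - 1`, and
let `1 ≤ i < e` and `a` with `p ^ i ∤ ã`. Writing `x_{(i)} = x.val % p ^ i`, there
exists `k ∈ {1, …, m}` with `γ̃ * (γ ^ k * a)_{(i)} ≢ (γ ^ (k+1) * a)_{(i)}`
modulo `p ^ (i + 1)`. -/
theorem stmt_19 (p e m : ℕ) (hp : p.Prime) (hodd : Odd p) (he : 2 ≤ e)
    (hm : m.Prime) (hmd : m ∣ p - 1)
    (γ : ZMod (p ^ e)) (hγ : orderOf γ = m)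
    (i : ℕ) (hi1 : 1 ≤ i) (hie : i < e)
    (a : ZMod (p ^ e)) (ha : ¬ p ^ i ∣ a.val) :
    ∃ k : ℕ, 1 ≤ k ∧ k ≤ m ∧
      ¬ (γ.val * ((γ ^ k * a).val % p ^ i) ≡
          (γ ^ (k + 1) * a).val % p ^ i [MOD p ^ (i + 1)]) :=
  stmt_19_general p e m hp hm hmd γ hγ i hie a ha
end
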